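/- arXiv:2204.10301 — 2 statements merged into one kernel-verified Lean document; each statement's English description precedes it below -/
import Mathlib

section
/- Suppose G = N·Z(G), where Z(G) is the centre of G. Then for any θ ∈ Irr(N) and any two characters χ, χ' ∈ Irr(G) lying over θ, there exists a linear character β of G with N contained in its kernel such that χ' = χ·β. In other words, the group of linear characters of G/N acts transitively on Irr(G | θ). -/
open scoped Classical Pointwise

noncomputable section

namespace CT

/-- `f` is the character of some finite-dimensional complex representation of `G`. -/
def IsChar (G : Type*) [Group G] (f : G → ℂ) : Prop :=
  ∃ (n : ℕ) (ρ : Representation ℂ G (Fin n → ℂ)),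
    f = fun g => LinearMap.trace ℂ (Fin n → ℂ) (ρ g)

/-- The usual inner product of class functions on a finite group. -/
def cInner (G : Type*) [Group G] [Fintype G] (f g : G → ℂ) : ℂ :=
  (Fintype.card G : ℂ)⁻¹ * ∑ x : G, f x * starRingEnd ℂ (g x)

/-- `f` is an irreducible (complex) character of `G`. -/
def IsIrr (G : Type*) [Group G] [Fintype G] (f : G → ℂ) : Prop :=
  IsChar G f ∧ cInner G f f = 1

variable {G : Type*} [Group G]

/-- Restriction of a class function to a subgroup. -/
def res (H : Subgroup G) (f : G → ℂ) : H → ℂ := fun h => f h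

/-- A character `f` of `G` lies over a character `l` of the subgroup `H` if `l` occurs
as a constituent of the restriction of `f` to `H`. -/
def LiesOver [Fintype G] (H : Subgroup G) (f : G → ℂ) (l : H → ℂ) : Prop :=
  cInner H (res H f) l ≠ 0

/-- The induced class function from a subgroup `H` to `G`. -/
def ind [Fintype G] (H : Subgroup G) (f : H → ℂ) : G → ℂ := fun g =>
  (Fintype.card H : ℂ)⁻¹ *
    ∑ x : G, if h : x * g * x⁻¹ ∈ H then f ⟨x * g * x⁻¹, h⟩ else 0

/-- The conjugate `f^a` of a class function `f` on a (normal) subgroup `N`,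
given by `n ↦ f (a * n * a⁻¹)`. -/
def conjFun (N : Subgroup G) (a : G) (f : N → ℂ) : N → ℂ := fun n =>
  if h : a * (n : G) * a⁻¹ ∈ N then f ⟨a * (n : G) * a⁻¹, h⟩ else 0

theorem conjFun_apply (N : Subgroup G) [hN : N.Normal] (a : G) (f : N → ℂ) (n : N) :
    conjFun N a f n = f ⟨a * (n : G) * a⁻¹, hN.conj_mem _ n.2 a⟩ := dif_pos _

theorem conjFun_one (N : Subgroup G) [hN : N.Normal] (f : N → ℂ) :
    conjFun N 1 f = f := by
  funext n
  rw [conjFun_apply N]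
  congr 1
  exact Subtype.ext (by group)

theorem conjFun_mul (N : Subgroup G) [hN : N.Normal] (a b : G) (f : N → ℂ) :
    conjFun N (a * b) f = conjFun N b (conjFun N a f) := by
  funext n
  rw [conjFun_apply N, conjFun_apply N, conjFun_apply N]
  congr 1
  exact Subtype.ext (by group)

/-- The stabilizer of a class function of a normal subgroup `N` under the
conjugation action of `G`. -/
def charStabilizer (N : Subgroup G) [hN : N.Normal] (f : N → ℂ) : Subgroup G where
  carrier := {a : G | conjFun N a f = f}
  one_mem' := conjFun_one N f
  mul_mem' := by
    intro a b ha hb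
    show conjFun N (a * b) f = f
    rw [conjFun_mul N a b f]
    rw [show conjFun N a f = f from ha]
    exact hb
  inv_mem' := by
    intro a ha
    show conjFun N a⁻¹ f = f
    have h : conjFun N (a * a⁻¹) f = conjFun N a⁻¹ f := by
      rw [conjFun_mul N a a⁻¹ f]
      rw [show conjFun N a f = f from ha]
    rw [← h, mul_inv_cancel, conjFun_one]

/-- Transport of a class function on `N` to the copy `N.subgroupOf K` of `N` inside `K`. -/
def resOf {K : Subgroup G} (N : Subgroup G) (f : N → ℂ) : (N.subgroupOf K) → ℂ :=
  fun x => f ⟨((x : ↥K) : G), Subgroup.mem_subgroupOf.mp x.2⟩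

/-- The `p`-part of a natural number. -/
def lpart (p n : ℕ) : ℕ := p ^ (n.factorization p)

end CT

/-!
Since `cInner` of two characters is the dimension of the space of intertwiners, the hypotheses
are statements about irreducible representations. Central elements act on an irreducible
representation by scalars, so when `G = N·Z(G)` every `N`-invariant subspace is `G`-invariant:
the restrictions of `χ` and `χ'` to `N` stay irreducible and therefore both equal `θ`. Writing
`g = n z` with `z` central, `χ (n z) = ω z * θ n` and `χ' (n z) = ω' z * θ n` for the central
characters `ω`, `ω'`. These agree on `N ∩ Z(G)`, so `ω' / ω` factors through
`Z(G) / (N ∩ Z(G)) ≅ G / N`, and this is `β`.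
-/

open Module LinearMap Representation

theorem IsOfFinOrder.norm_eq_one_of_hasEigenvalue {V : Type*} [AddCommGroup V] [Module ℂ V]
    {A : (Module.End ℂ V)ˣ} (hA : IsOfFinOrder A) {μ : ℂ}
    (hμ : (A : Module.End ℂ V).HasEigenvalue μ) : ‖μ‖ = 1 := by
  obtain ⟨v, hv⟩ := hμ.exists_hasEigenvector
  have hroot : μ ^ orderOf A = 1 := by
    have := hv.pow_apply (orderOf A)
    rw [← Units.val_pow_eq_pow_val, pow_orderOf_eq_one, Units.val_one,
      Module.End.one_apply] at this
    exact smul_left_injective ℂ hv.2 (by simpa using this.symm)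
  exact (pow_eq_one_iff_of_nonneg (norm_nonneg μ) hA.orderOf_pos.ne').mp
    (by rw [← norm_pow, hroot, norm_one])

theorem Module.End.starRingEnd_trace_eq_trace_inv {V : Type*} [AddCommGroup V] [Module ℂ V]
    [FiniteDimensional ℂ V] {A : (Module.End ℂ V)ˣ} (hA : IsOfFinOrder A) :
    starRingEnd ℂ (trace ℂ V A) = trace ℂ V ↑A⁻¹ := by
  set f : Module.End ℂ V := ↑A
  have hcomm : Commute f ↑A⁻¹ := Units.commute_coe_inv A
  have hint := DirectSum.isInternal_submodule_of_iSupIndep_of_iSup_eq_top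
    f.independent_maxGenEigenspace f.iSup_maxGenEigenspace_eq_top
  have hfin : {μ | f.maxGenEigenspace μ ≠ ⊥}.Finite :=
    WellFoundedGT.finite_ne_bot_of_iSupIndep f.independent_maxGenEigenspace
  rw [trace_eq_sum_trace_restrict' hint hfin (f.mapsTo_maxGenEigenspace_of_comm (Commute.refl f)),
    trace_eq_sum_trace_restrict' hint hfin (f.mapsTo_maxGenEigenspace_of_comm hcomm), map_sum]
  refine Finset.sum_congr rfl fun μ hμ => ?_
  -- On the generalised eigenspace of `μ`, `A` has trace `μ d` and `A⁻¹` has trace `μ⁻¹ d`,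
  -- and `μ⁻¹ = conj μ` because `μ` is a root of unity.
  set fμ := f.restrict (f.mapsTo_maxGenEigenspace_of_comm (Commute.refl f) μ)
  set gμ := (↑A⁻¹ : Module.End ℂ V).restrict (f.mapsTo_maxGenEigenspace_of_comm hcomm μ)
  set d : ℂ := (finrank ℂ (f.maxGenEigenspace μ) : ℂ)
  have hnil : IsNilpotent (fμ - algebraMap ℂ _ μ) :=
    f.isNilpotent_restrict_maxGenEigenspace_sub_algebraMap μ
  have htrace_f : trace ℂ _ fμ = μ * d := by
    have := trace_comp_eq_mul_of_commute_of_isNilpotent μ (Commute.one_left fμ) hnil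
    rwa [← Module.End.mul_eq_comp, one_mul, trace_one] at this
  have htrace_g : d = μ * trace ℂ _ gμ := by
    have hgf : gμ * fμ = 1 := by
      ext x : 2
      show (↑A⁻¹ * ↑A : Module.End ℂ V) x = x
      rw [Units.inv_mul, Module.End.one_apply]
    have := trace_comp_eq_mul_of_commute_of_isNilpotent μ
      (restrict_commute hcomm.symm (f.mapsTo_maxGenEigenspace_of_comm hcomm μ) _) hnil
    rwa [← Module.End.mul_eq_comp, hgf, trace_one] at this
  have hnorm : ‖μ‖ = 1 := hA.norm_eq_one_of_hasEigenvalue <|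
    (Module.End.hasUnifEigenvalue_iff_hasUnifEigenvalue_one (by simp)).mp (hfin.mem_toFinset.mp hμ)
  have hμ0 : μ ≠ 0 := by rintro rfl; simp at hnorm
  rw [htrace_f, map_mul, Complex.conj_natCast, ← Complex.inv_eq_conj hnorm]
  field_simp
  exact htrace_g

theorem MonoidHom.exists_extend_of_forall_eq_mul {G M : Type*} [Group G] [Monoid M]
    (N H : Subgroup G) [N.Normal] (hG : ∀ g : G, ∃ n ∈ N, ∃ h ∈ H, g = n * h)
    (f : H →* M) (hf : ∀ h : H, (h : G) ∈ N → f h = 1) :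
    ∃ β : G →* M, (∀ n ∈ N, β n = 1) ∧ ∀ h : H, β h = f h := by
  let π : H →* G ⧸ N := (QuotientGroup.mk' N).comp H.subtype
  have hπ : Function.Surjective π := by
    intro x
    obtain ⟨g, rfl⟩ := QuotientGroup.mk_surjective x
    obtain ⟨n, hn, h, hh, rfl⟩ := hG g
    exact ⟨⟨h, hh⟩, by simp [π, (QuotientGroup.eq_one_iff n).mpr hn]⟩
  have hker : π.ker ≤ f.ker := fun h hh => hf h (by simpa [π] using hh)
  let e := QuotientGroup.quotientKerEquivOfSurjective π hπ
  refine ⟨((QuotientGroup.lift π.ker f hker).comp e.symm.toMonoidHom).comp (QuotientGroup.mk' N),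
    fun n hn => ?_, fun h => ?_⟩
  · simp [(QuotientGroup.eq_one_iff n).mpr hn]
  · have : e.symm (h : G) = QuotientGroup.mk h := (MulEquiv.symm_apply_eq _).mpr rfl
    simp [this]

section
variable {G k V : Type*} [Group G] [Field k] [AddCommGroup V] [Module k V]

theorem Representation.character_mul_of_forall_apply_eq_smul {M : Type*} [Monoid M]
    (ρ : Representation k M V) {h : M} {c : k} (hc : ∀ v, ρ h v = c • v) (g : M) :
    ρ.character (g * h) = c * ρ.character g := by
  have : ρ (g * h) = c • ρ g := by ext v; simp [hc]
  rw [character, this, map_smul, smul_eq_mul, character]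

theorem Representation.isIrreducible_of_finrank_intertwiningMap_self_eq_one [Finite G]
    [NeZero (Nat.card G : k)] (ρ : Representation k G V)
    (h : finrank k (IntertwiningMap ρ ρ) = 1) : IsIrreducible ρ := by
  have : Nontrivial (IntertwiningMap ρ ρ) := Module.nontrivial_of_finrank_eq_succ h
  have : Nontrivial V := by
    by_contra hV
    rw [not_nontrivial_iff_subsingleton] at hV
    exact one_ne_zero (IntertwiningMap.ext (Subsingleton.elim (α := V →ₗ[k] V) _ _) :
      (1 : IntertwiningMap ρ ρ) = 0)
  have : Nontrivial ρ.asModule := ‹Nontrivial V›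
  rw [irreducible_iff_isSimpleModule_asModule, isSimpleModule_iff]
  refine ⟨fun p => ?_⟩
  -- The projection onto a complement (Maschke) is an idempotent intertwiner, hence `0` or `1`.
  obtain ⟨q, hpq⟩ := exists_isCompl p
  obtain ⟨c, hc⟩ := (finrank_eq_one_iff_of_nonzero' _ one_ne_zero).mp h
    ((IntertwiningMap.equivLinearMapAsModule ρ ρ).symm (p.projection q hpq))
  have hproj : ∀ v, p.projection q hpq v = c • v := fun v =>
    (congrArg (fun f : IntertwiningMap ρ ρ => f v) hc).symm
  have hcc : IsIdempotentElem c := by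
    obtain ⟨v, hv⟩ := exists_ne (0 : ρ.asModule)
    have := congrArg (· v) (p.isIdempotentElem_projection hpq).eq
    simp only [Module.End.mul_apply, hproj, smul_smul] at this
    exact smul_left_injective k hv this
  rcases IsIdempotentElem.iff_eq_zero_or_one.mp hcc with rfl | rfl
  · left
    rw [← p.range_projection hpq, LinearMap.range_eq_bot]
    ext v
    simp [hproj]
  · right
    rw [← p.range_projection hpq, LinearMap.range_eq_top]
    intro v
    exact ⟨v, by simp [hproj]⟩

namespace Representation.IsIrreducible

variable (ρ : Representation k G V) [IsIrreducible ρ]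

theorem character_one_ne_zero [CharZero k] [FiniteDimensional k V] : ρ.character 1 ≠ 0 := by
  have : Nontrivial V := IsSimpleModule.nontrivial (MonoidAlgebra k G) ρ.asModule
  rw [char_one]
  exact_mod_cast finrank_pos.ne'

theorem exists_centralCharacter [IsAlgClosed k] [FiniteDimensional k V] :
    ∃ ω : Subgroup.center G →* kˣ,
      ∀ (z : Subgroup.center G) (v : V), ρ z v = (ω z : k) • v := by
  let e : k ≃ₐ[k] IntertwiningMap ρ ρ :=
    AlgEquiv.ofBijective (Algebra.ofId k _) algebraMap_intertwiningMap_bijective_of_isAlgClosed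
  let central : Subgroup.center G →* IntertwiningMap ρ ρ :=
    { toFun z := IntertwiningMap.centralMul ρ z (Subgroup.center_toSubmonoid G ▸ z.2)
      map_one' := by ext; simp [IntertwiningMap.centralMul]
      map_mul' _ _ := by ext; simp [IntertwiningMap.centralMul] }
  refine ⟨(e.symm.toMonoidHom.comp central).toHomUnits, fun z v => ?_⟩
  exact (DFunLike.congr_fun (e.apply_symm_apply (central z)) v).symm

theorem comp_subtype_of_forall_eq_mul_center {H : Subgroup G}
    (hG : ∀ g : G, ∃ h ∈ H, ∃ z ∈ Subgroup.center G, g = h * z)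
    [IsAlgClosed k] [FiniteDimensional k V] : IsIrreducible (ρ.comp H.subtype) := by
  obtain ⟨ω, hω⟩ := exists_centralCharacter ρ
  let e : Subrepresentation (ρ.comp H.subtype) ≃o Subrepresentation ρ :=
    { toFun p := ⟨p.toSubmodule, fun g v hv => by
        obtain ⟨h, hh, z, hz, rfl⟩ := hG g
        rw [map_mul, Module.End.mul_apply, hω ⟨z, hz⟩]
        exact p.apply_mem_toSubmodule ⟨h, hh⟩ (p.toSubmodule.smul_mem _ hv)⟩
      invFun p := ⟨p.toSubmodule, fun h _ hv => p.apply_mem_toSubmodule h hv⟩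
      left_inv _ := rfl
      right_inv _ := rfl
      map_rel_iff' := Iff.rfl }
  exact (OrderIso.isSimpleOrder_iff e).mpr inferInstance

end Representation.IsIrreducible

end

namespace CT

section
variable {G : Type*} [Group G] [Fintype G]
variable {V W : Type*} [AddCommGroup V] [Module ℂ V] [FiniteDimensional ℂ V]
  [AddCommGroup W] [Module ℂ W] [FiniteDimensional ℂ W]

theorem starRingEnd_character (ρ : Representation ℂ G V) (g : G) :
    starRingEnd ℂ (ρ.character g) = ρ.character g⁻¹ := by
  simpa [character, ← map_inv] using Module.End.starRingEnd_trace_eq_trace_inv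
    (ρ.toHomUnits.isOfFinOrder (isOfFinOrder_of_finite g))

theorem cInner_character (ρ : Representation ℂ G V) (σ : Representation ℂ G W) :
    cInner G ρ.character σ.character = finrank ℂ (IntertwiningMap σ ρ) := by
  rw [← card_inv_mul_sum_char_mul_char_eq_finrank, cInner, Nat.card_eq_fintype_card]
  simp_rw [starRingEnd_character]

theorem character_eq_of_cInner_ne_zero (ρ : Representation ℂ G V) (σ : Representation ℂ G W)
    [IsIrreducible ρ] [IsIrreducible σ] (h : cInner G ρ.character σ.character ≠ 0) :
    ρ.character = σ.character := by
  rw [cInner_character, Nat.cast_ne_zero, ← Nat.pos_iff_ne_zero,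
    finrank_pos_iff_exists_ne_zero] at h
  obtain ⟨f, hf⟩ := h
  exact (char_iso (f.ofBijective ((IsIrreducible.bijective_or_eq_zero f).resolve_right hf))).symm

theorem res_character_eq_of_liesOver {N : Subgroup G}
    (hG : ∀ g : G, ∃ n ∈ N, ∃ z ∈ Subgroup.center G, g = n * z)
    (ρ : Representation ℂ G V) (τ : Representation ℂ N W)
    [IsIrreducible ρ] [IsIrreducible τ] (h : LiesOver N ρ.character τ.character) :
    res N ρ.character = τ.character :=
  have := IsIrreducible.comp_subtype_of_forall_eq_mul_center ρ hG
  character_eq_of_cInner_ne_zero (ρ.comp N.subtype) τ h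

theorem IsIrr.exists_isIrreducible {χ : G → ℂ} (hχ : IsIrr G χ) :
    ∃ (n : ℕ) (ρ : Representation ℂ G (Fin n → ℂ)),
      IsIrreducible ρ ∧ χ = ρ.character := by
  obtain ⟨⟨n, ρ, rfl⟩, h⟩ := hχ
  refine ⟨n, ρ, isIrreducible_of_finrank_intertwiningMap_self_eq_one ρ ?_, rfl⟩
  exact_mod_cast (cInner_character ρ ρ).symm.trans h

end

/-- Suppose `G = N·Z(G)`.  Then for any `θ ∈ Irr(N)` and any
`χ, χ' ∈ Irr(G)` lying over `θ` there is a linear character `β` of `G` with `N ≤ ker β`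
such that `χ' = χ·β`. -/
theorem stmt3 {G : Type*} [Group G] [Fintype G] (N : Subgroup G) [N.Normal]
    (hGZ : ∀ g : G, ∃ n ∈ N, ∃ z ∈ Subgroup.center G, g = n * z)
    (θ : N → ℂ) (hθ : IsIrr N θ)
    (χ χ' : G → ℂ) (hχ : IsIrr G χ) (hχ' : IsIrr G χ')
    (h1 : LiesOver N χ θ) (h2 : LiesOver N χ' θ) :
    ∃ β : G →* ℂ, (∀ n ∈ N, β n = 1) ∧ χ' = fun g => χ g * β g := by
  obtain ⟨_, ρ, hρ, rfl⟩ := hχ.exists_isIrreducible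
  obtain ⟨_, ρ', hρ', rfl⟩ := hχ'.exists_isIrreducible
  obtain ⟨_, τ, hτ, rfl⟩ := hθ.exists_isIrreducible
  have hN (n : N) : ρ.character n = ρ'.character n :=
    (congrFun (res_character_eq_of_liesOver hGZ ρ τ h1) n).trans
      (congrFun (res_character_eq_of_liesOver hGZ ρ' τ h2) n).symm
  obtain ⟨ω, hω⟩ := IsIrreducible.exists_centralCharacter ρ
  obtain ⟨ω', hω'⟩ := IsIrreducible.exists_centralCharacter ρ'
  have hagree (z : Subgroup.center G) (hz : (z : G) ∈ N) : (ω⁻¹ * ω') z = 1 := by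
    have hχz := character_mul_of_forall_apply_eq_smul ρ (hω z) 1
    have hχ'z := character_mul_of_forall_apply_eq_smul ρ' (hω' z) 1
    rw [one_mul] at hχz hχ'z
    rw [← hN ⟨z, hz⟩, ← show ρ.character 1 = ρ'.character 1 from hN 1, hχz] at hχ'z
    rw [MonoidHom.mul_apply, MonoidHom.inv_apply, inv_mul_eq_one]
    exact Units.ext (mul_right_cancel₀ (IsIrreducible.character_one_ne_zero ρ) hχ'z)
  obtain ⟨β, hβN, hβZ⟩ :=
    MonoidHom.exists_extend_of_forall_eq_mul N _ hGZ (ω⁻¹ * ω') hagree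
  refine ⟨(Units.coeHom ℂ).comp β, fun n hn => by simp [hβN n hn], funext fun g => ?_⟩
  obtain ⟨n, hn, z, hz, rfl⟩ := hGZ g
  rw [character_mul_of_forall_apply_eq_smul ρ (hω ⟨z, hz⟩),
    character_mul_of_forall_apply_eq_smul ρ' (hω' ⟨z, hz⟩), ← hN ⟨n, hn⟩]
  simp only [MonoidHom.coe_comp, Function.comp_apply, map_mul, hβN n hn, hβZ ⟨z, hz⟩,
    MonoidHom.mul_apply, MonoidHom.inv_apply, Units.coeHom_apply, Units.val_one,
    Units.val_inv_eq_inv_val]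
  field_simp

end CT
end
end

section
/- Let N be a normal subgroup of a finite group G with G/N cyclic, and let θ ∈ Irr(N) be G-invariant. Then θ extends to G, i.e., there exists χ ∈ Irr(G) whose restriction to N equals θ. -/
open scoped Classical Pointwise

noncomputable section

/-!
`θ` is the character of a representation `ρ` of `N`, and `⟨θ, θ⟩ = 1` says that `ρ` is
irreducible (the inner product is the dimension of `End_N ρ`; Maschke and Schur). Let `g ∈ G` map
to a generator of `G/N`, of order `m`. Invariance of `θ` makes `ρ` isomorphic to its conjugate
`n ↦ ρ (g n g⁻¹)`, so some invertible `T` satisfies `T ρ(n) T⁻¹ = ρ(g n g⁻¹)`. Then `T ^ m` and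
`ρ (g ^ m)` induce the same conjugation on `ρ`, so by Schur they differ by a scalar, and after
rescaling `T` by an `m`-th root of it, `T ^ m = ρ (g ^ m)`. Now `(n, s) ↦ ρ(n) T ^ s` is a
homomorphism on `N ⋊ ℤ` vanishing on the kernel of `(n, s) ↦ n g ^ s`, i.e. a representation of
`G` extending `ρ`. It is irreducible because its restriction to `N` is, and its character
restricts to `θ`.
-/

open Module LinearMap ComplexConjugate

theorem LinearMap.trace_eq_sum_smul_finrank {ι K M : Type*} [Field K] [AddCommGroup M]
    [Module K M] [FiniteDimensional K M] [DecidableEq ι] {N : ι → Submodule K M}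
    (h : DirectSum.IsInternal N) (hN : {i | N i ≠ ⊥}.Finite) {f : End K M} {c : ι → K}
    (hf : ∀ i, ∀ v ∈ N i, f v = c i • v) :
    trace K M f = ∑ i ∈ hN.toFinset, c i * finrank K (N i) := by
  have hmaps i : Set.MapsTo f (N i) (N i) := fun v hv => hf i v hv ▸ (N i).smul_mem _ hv
  rw [trace_eq_sum_trace_restrict' h hN hmaps]
  refine Finset.sum_congr rfl fun i _ => ?_
  have : f.restrict (hmaps i) = c i • LinearMap.id :=
    LinearMap.ext fun v => Subtype.ext (hf i v v.2)
  rw [this, map_smul, trace_id, smul_eq_mul]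

section

variable {V : Type*} [AddCommGroup V] [Module ℂ V] {A B : End ℂ V} {k : ℕ}

theorem Module.End.apply_eq_conj_smul_of_mem_eigenspace (hk : k ≠ 0) (hA : A ^ k = 1)
    (hBA : B * A = 1) {μ : ℂ} {v : V} (hv : v ∈ A.eigenspace μ) : B v = conj μ • v := by
  rcases eq_or_ne v 0 with rfl | hv0
  · simp
  have hμk : μ ^ k = 1 := smul_left_injective ℂ hv0 <| by
    simpa [hA, eq_comm] using (hasEigenvector_iff.mpr ⟨hv, hv0⟩).pow_apply k
  have hμ : conj μ * μ = 1 := by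
    rw [Complex.conj_mul', Complex.norm_eq_one_of_pow_eq_one hμk hk]; simp
  calc B v = B ((conj μ * μ) • v) := by rw [hμ, one_smul]
    _ = conj μ • (B * A) v := by rw [mul_smul, map_smul, mul_apply, mem_eigenspace_iff.mp hv]
    _ = conj μ • v := by rw [hBA, one_apply]

theorem Module.End.trace_eq_conj_trace_of_pow_eq_one [FiniteDimensional ℂ V] (hk : k ≠ 0)
    (hA : A ^ k = 1) (hBA : B * A = 1) : trace ℂ V B = conj (trace ℂ V A) := by
  have hss : A.IsSemisimple := by
    refine isSemisimple_of_squarefree_aeval_eq_zero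
      (Polynomial.separable_X_pow_sub_C (1 : ℂ) (by exact_mod_cast hk) one_ne_zero).squarefree ?_
    simp [hA]
  have hint : DirectSum.IsInternal A.eigenspace :=
    (DirectSum.isInternal_submodule_iff_iSupIndep_and_iSup_eq_top _).mpr
      ⟨eigenspaces_iSupIndep A, hss.iSup_eigenspace_eq_top⟩
  have hfin := Submodule.finite_ne_bot_of_iSupIndep (eigenspaces_iSupIndep A)
  rw [trace_eq_sum_smul_finrank hint hfin (f := A) (c := id)
      (fun μ v hv => mem_eigenspace_iff.mp hv),
    trace_eq_sum_smul_finrank hint hfin (f := B) (c := conj)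
      (fun μ v hv => apply_eq_conj_smul_of_mem_eigenspace hk hA hBA hv)]
  simp

theorem Representation.character_inv {G : Type*} [Group G] [Finite G] [FiniteDimensional ℂ V]
    (ρ : Representation ℂ G V) (g : G) : ρ.character g⁻¹ = conj (ρ.character g) :=
  Module.End.trace_eq_conj_trace_of_pow_eq_one (orderOf_pos g).ne'
    (by rw [← map_pow, pow_orderOf_eq_one, map_one]) (by rw [← map_mul, inv_mul_cancel, map_one])

end

theorem IsSimpleModule.of_finrank_end_eq_one {k R M : Type*} [Field k] [Ring R] [Algebra k R]
    [AddCommGroup M] [Module R M] [Module k M] [IsScalarTower k R M] [IsSemisimpleModule R M]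
    (h : finrank k (Module.End R M) = 1) : IsSimpleModule R M := by
  have : Nontrivial M := by
    by_contra hM
    rw [not_nontrivial_iff_subsingleton] at hM
    simp [finrank_zero_of_subsingleton] at h
  refine { eq_bot_or_eq_top := fun m => ?_ }
  -- the projection onto `m` along a complement is a scalar, hence `0` or `1`
  obtain ⟨q, hq⟩ := exists_isCompl m
  obtain ⟨c, hc⟩ := (finrank_eq_one_iff_of_nonzero' (1 : Module.End R M) one_ne_zero).mp h
    (m.projection q hq)
  have hrange : range (c • (1 : Module.End R M)) = m := by
    rw [hc, Submodule.range_projection]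
  rcases eq_or_ne c 0 with rfl | hc0
  · left; simpa using hrange.symm
  · right
    rw [← hrange, range_eq_top]
    exact fun x => ⟨c⁻¹ • x, by simp [smul_smul, hc0]⟩

theorem Units.exists_algebraMap_mul_pow_eq {k A : Type*} [Field k] [IsAlgClosed k] [Ring A]
    [Nontrivial A] [Algebra k A] {T W : Aˣ} {m : ℕ} (hm : m ≠ 0) {c : k}
    (hc : (T ^ m : A) = c • (W : A)) :
    ∃ z : kˣ, (Units.map (algebraMap k A).toMonoidHom z * T) ^ m = W := by
  have hc0 : c ≠ 0 := by
    rintro rfl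
    exact (T ^ m).ne_zero (by simpa using hc)
  obtain ⟨z, hz⟩ := IsAlgClosed.exists_pow_nat_eq c⁻¹ (Nat.pos_of_ne_zero hm)
  have hz0 : z ≠ 0 := by rintro rfl; simp [zero_pow hm] at hz; exact hc0 hz.symm
  refine ⟨Units.mk0 z hz0, Units.ext ?_⟩
  change (algebraMap k A z * (T : A)) ^ m = W
  rw [(Algebra.commute_algebraMap_left z (T : A)).mul_pow, hc, Algebra.smul_def, ← mul_assoc,
    ← map_pow, ← map_mul, hz, inv_mul_cancel₀ hc0, map_one, one_mul]

section

variable {G M : Type*} [Group G] [Group M] {N : Subgroup G} [N.Normal]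

theorem MonoidHom.map_conjNormal_zpow (f : N →* M) {g : G} {t : M}
    (hconj : ∀ n, f (MulAut.conjNormal g n) = t * f n * t⁻¹) (k : ℤ) (n : N) :
    f (MulAut.conjNormal (g ^ k) n) = t ^ k * f n * (t ^ k)⁻¹ := by
  induction k using Int.induction_on generalizing n with
  | zero => simp
  | succ k ih =>
    rw [zpow_add_one, map_mul, MulAut.mul_apply, ih, hconj, zpow_add_one]
    group
  | pred k ih =>
    have hinv : f (MulAut.conjNormal g⁻¹ n) = t⁻¹ * f n * t := by
      have := hconj (MulAut.conjNormal g⁻¹ n)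
      rw [← MulAut.mul_apply, ← map_mul, mul_inv_cancel, map_one, MulAut.one_apply] at this
      rw [this]; group
    rw [zpow_sub_one, map_mul, MulAut.mul_apply, ih, hinv, zpow_sub_one]
    group

theorem MonoidHom.exists_extension_of_quotient_eq_zpowers {g : G}
    (hg : ∀ q : G ⧸ N, q ∈ Subgroup.zpowers (g : G ⧸ N)) (f : N →* M) {t : M}
    (hconj : ∀ n, f (MulAut.conjNormal g n) = t * f n * t⁻¹) {w : N}
    (hw : (w : G) = g ^ orderOf (g : G ⧸ N)) (hpow : t ^ orderOf (g : G ⧸ N) = f w) :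
    ∃ F : G →* M, F.comp N.subtype = f := by
  let act : Multiplicative ℤ →* MulAut N := zpowersHom _ (MulAut.conjNormal g)
  let π : N ⋊[act] Multiplicative ℤ →* G :=
    SemidirectProduct.lift N.subtype (zpowersHom G g) fun s => by
      ext n; simp [act, ← map_zpow]
  let Φ : N ⋊[act] Multiplicative ℤ →* M :=
    SemidirectProduct.lift f (zpowersHom M t) fun s => by
      ext n; simp [act, ← map_zpow, map_conjNormal_zpow f hconj]
  have hπ : Function.Surjective π := by
    intro x
    obtain ⟨s, hs⟩ := Subgroup.mem_zpowers_iff.mp (hg x)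
    have hmem : x * (g ^ s)⁻¹ ∈ N := by
      rw [← QuotientGroup.eq_one_iff]; simp [hs]
    exact ⟨⟨⟨_, hmem⟩, Multiplicative.ofAdd s⟩, by simp [π]⟩
  have hker : π.ker ≤ Φ.ker := by
    rintro ⟨n, s⟩ hns
    have h : ((n⁻¹ : N) : G) = g ^ s.toAdd := by
      simp only [π, MonoidHom.mem_ker] at hns
      exact inv_eq_of_mul_eq_one_right (by simpa using hns)
    obtain ⟨j, hj⟩ : (orderOf (g : G ⧸ N) : ℤ) ∣ s.toAdd := by
      rw [orderOf_dvd_iff_zpow_eq_one, ← QuotientGroup.mk_zpow, ← h, QuotientGroup.eq_one_iff]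
      exact (n⁻¹).2
    have hn : n⁻¹ = w ^ j := Subtype.ext (by simp [h, hj, hw, zpow_mul])
    simp [Φ, hj, zpow_mul, hpow, ← map_zpow, ← hn]
  refine ⟨π.liftOfSurjective hπ ⟨Φ, hker⟩, MonoidHom.ext fun n => ?_⟩
  have := π.liftOfRightInverse_comp_apply _ (Function.rightInverse_surjInv hπ) ⟨Φ, hker⟩
    (SemidirectProduct.inl n)
  simpa [π, Φ] using this

end

namespace Representation

variable {k G H V W : Type*} [Field k] [AddCommGroup V] [Module k V]

section Monoid

variable [Monoid G] [Monoid H] {ρ : Representation k G V}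

theorem IsIrreducible.nontrivial [ρ.IsIrreducible] : Nontrivial V := by
  by_contra hV
  rw [not_nontrivial_iff_subsingleton] at hV
  exact bot_ne_top (α := Subrepresentation ρ)
    (Subrepresentation.toSubmodule_injective (Subsingleton.elim _ _))

theorem IsIrreducible.of_comp (f : H →* G) [IsIrreducible (ρ.comp f)] : ρ.IsIrreducible := by
  let res (p : Subrepresentation ρ) : Subrepresentation (ρ.comp f) :=
    ⟨p.toSubmodule, fun h _ hv => p.apply_mem_toSubmodule (f h) hv⟩
  have hres : Function.Injective res := fun p q h =>
    Subrepresentation.ext (congrArg (·.toSubmodule) h)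
  have : Nontrivial (Subrepresentation ρ) := ⟨⊥, ⊤, fun h => bot_ne_top (congrArg res h)⟩
  exact { eq_bot_or_eq_top := fun p => (eq_bot_or_eq_top (res p)).imp (hres ·) (hres ·) }

theorem IsIrreducible.exists_eq_smul_one [ρ.IsIrreducible] [FiniteDimensional k V]
    [IsAlgClosed k] {A : Module.End k V} (hA : ∀ g, A * ρ g = ρ g * A) :
    ∃ c : k, A = c • 1 := by
  obtain ⟨c, hc⟩ :=
    algebraMap_intertwiningMap_bijective_of_isAlgClosed.2 (⟨A, hA⟩ : IntertwiningMap ρ ρ)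
  exact ⟨c, (congrArg IntertwiningMap.toLinearMap hc).symm⟩

end Monoid

section Group

variable [Group G]

theorem IsIrreducible.exists_val_eq_smul_of_conj_eq {ρ : Representation k G V} [ρ.IsIrreducible]
    [FiniteDimensional k V] [IsAlgClosed k] {a b : (Module.End k V)ˣ}
    (h : ∀ g, a * ρ.asGroupHom g * a⁻¹ = b * ρ.asGroupHom g * b⁻¹) :
    ∃ c : k, (b : Module.End k V) = c • (a : Module.End k V) := by
  obtain ⟨c, hc⟩ := exists_eq_smul_one (ρ := ρ) (A := ↑(a⁻¹ * b)) fun g => by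
    have hcomm : a⁻¹ * b * ρ.asGroupHom g = ρ.asGroupHom g * (a⁻¹ * b) :=
      calc a⁻¹ * b * ρ.asGroupHom g
          = a⁻¹ * (b * ρ.asGroupHom g * b⁻¹) * b := by group
        _ = a⁻¹ * (a * ρ.asGroupHom g * a⁻¹) * b := by rw [h g]
        _ = ρ.asGroupHom g * (a⁻¹ * b) := by group
    simpa [asGroupHom_apply] using congrArg Units.val hcomm
  refine ⟨c, ?_⟩
  rw [← mul_inv_cancel_left a b, Units.val_mul, hc, mul_smul_comm, mul_one]

theorem isIrreducible_of_finrank_intertwiningMap_self_eq_one_s13 [Fintype G]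
    [NeZero (Nat.card G : k)] (ρ : Representation k G V)
    (h : finrank k (IntertwiningMap ρ ρ) = 1) : IsIrreducible ρ := by
  rw [irreducible_iff_isSimpleModule_asModule]
  exact .of_finrank_end_eq_one (k := k)
    ((IntertwiningMap.equivAlgEnd ρ).toLinearEquiv.finrank_eq ▸ h)

theorem nonempty_equiv_of_character_eq [Fintype G] [NeZero (Nat.card G : k)]
    [IsAlgClosed k] [FiniteDimensional k V] [AddCommGroup W] [Module k W] [FiniteDimensional k W]
    (ρ : Representation k G V) (σ : Representation k G W) [ρ.IsIrreducible] [σ.IsIrreducible]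
    (h : ρ.character = σ.character) : Nonempty (ρ.Equiv σ) := by
  have := invertibleOfNonzero (NeZero.ne (Nat.card G : k))
  have h1 := char_orthonormal σ ρ
  rw [← h, char_orthonormal ρ ρ, if_pos ⟨Equiv.refl ρ⟩] at h1
  by_contra hne
  simp [if_neg hne] at h1

variable [IsAlgClosed k] [FiniteDimensional k V] {N : Subgroup G} [N.Normal]
  (ρ : Representation k N V) [ρ.IsIrreducible]

theorem exists_conj_eq_and_pow_eq {g : G}
    (e : ρ.Equiv (ρ.comp (MulAut.conjNormal g).toMonoidHom)) {w : N} {m : ℕ}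
    (hw : (w : G) = g ^ m) :
    ∃ t : (Module.End k V)ˣ, (∀ n, ρ.asGroupHom (MulAut.conjNormal g n) =
      t * ρ.asGroupHom n * t⁻¹) ∧ t ^ m = ρ.asGroupHom w := by
  let T := (GeneralLinearGroup.generalLinearEquiv k V).symm e.toLinearEquiv
  have hT n : ρ.asGroupHom (MulAut.conjNormal g n) = T * ρ.asGroupHom n * T⁻¹ :=
    Units.ext (e.conj_apply_self n).symm
  rcases eq_or_ne m 0 with rfl | hm
  · have hw1 : w = 1 := Subtype.ext (by simpa using hw)
    exact ⟨T, hT, by simp [hw1]⟩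
  have : Nontrivial V := IsIrreducible.nontrivial (ρ := ρ)
  obtain ⟨c, hc⟩ := IsIrreducible.exists_val_eq_smul_of_conj_eq (ρ := ρ)
    (a := ρ.asGroupHom w) (b := T ^ m) fun n => by
      rw [← zpow_natCast, ← MonoidHom.map_conjNormal_zpow _ hT, ← map_inv, ← map_mul, ← map_mul]
      congr 1
      exact Subtype.ext (by rw [MulAut.conjNormal_apply]; simp [hw])
  obtain ⟨z, hz⟩ := Units.exists_algebraMap_mul_pow_eq hm hc
  refine ⟨_ * T, fun n => ?_, hz⟩
  set u := Units.map (algebraMap k (Module.End k V)).toMonoidHom z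
  have hu x : u * x = x * u := Units.ext (Algebra.commutes _ _)
  calc ρ.asGroupHom (MulAut.conjNormal g n)
      = u * (T * ρ.asGroupHom n * T⁻¹) * u⁻¹ := by rw [hT, hu, mul_inv_cancel_right]
    _ = u * T * ρ.asGroupHom n * (u * T)⁻¹ := by group

theorem exists_comp_subtype_eq_of_isCyclic (hcyc : IsCyclic (G ⧸ N))
    (hinv : ∀ g : G, Nonempty (ρ.Equiv (ρ.comp (MulAut.conjNormal g).toMonoidHom))) :
    ∃ ψ : Representation k G V, ψ.comp N.subtype = ρ := by
  obtain ⟨q, hq⟩ := hcyc.exists_generator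
  obtain ⟨g, rfl⟩ := QuotientGroup.mk_surjective q
  have hmem : g ^ orderOf (g : G ⧸ N) ∈ N := by
    rw [← QuotientGroup.eq_one_iff, QuotientGroup.mk_pow, pow_orderOf_eq_one]
  obtain ⟨t, hconj, hpow⟩ := exists_conj_eq_and_pow_eq ρ (hinv g).some (w := ⟨_, hmem⟩) rfl
  obtain ⟨F, hF⟩ := MonoidHom.exists_extension_of_quotient_eq_zpowers hq _ hconj rfl hpow
  refine ⟨(Units.coeHom _).comp F, MonoidHom.ext fun n => ?_⟩
  simpa [asGroupHom_apply] using congrArg Units.val (DFunLike.congr_fun hF n)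

end Group

end Representation

namespace CT

open Representation

section

variable {G V W : Type*} [Group G] [AddCommGroup V] [Module ℂ V]

theorem character_comp_conjNormal {N : Subgroup G} [N.Normal] (ρ : Representation ℂ N V)
    (g : G) : character (ρ.comp (MulAut.conjNormal g).toMonoidHom) = conjFun N g ρ.character := by
  funext n
  rw [conjFun_apply]
  rfl

variable [FiniteDimensional ℂ V]

theorem cInner_character_eq_finrank [Fintype G] [AddCommGroup W] [Module ℂ W]
    [FiniteDimensional ℂ W] (ρ : Representation ℂ G V) (σ : Representation ℂ G W) :
    cInner G σ.character ρ.character = finrank ℂ (ρ.IntertwiningMap σ) := by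
  have := invertibleOfNonzero (NeZero.ne (Nat.card G : ℂ))
  rw [cInner, ← Nat.card_eq_fintype_card, ← card_inv_mul_sum_char_mul_char_eq_finrank]
  simp [character_inv]

theorem cInner_character_self_eq_one_iff [Fintype G] (ρ : Representation ℂ G V) :
    cInner G ρ.character ρ.character = 1 ↔ ρ.IsIrreducible := by
  rw [cInner_character_eq_finrank, Nat.cast_eq_one]
  exact ⟨isIrreducible_of_finrank_intertwiningMap_self_eq_one_s13 ρ,
    fun _ => IsIrreducible.finrank_intertwiningMap_self ρ⟩

end

/-- Isaacs, Corollary 11.22. If `N ⊴ G` with `G/N` cyclic and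
`θ ∈ Irr(N)` is `G`-invariant, then `θ` extends to `G`. -/
theorem stmt13 {G : Type*} [Group G] [Fintype G] (N : Subgroup G) [N.Normal]
    (hcyc : IsCyclic (G ⧸ N))
    (θ : N → ℂ) (hθ : IsIrr N θ)
    (hinv : ∀ g : G, conjFun N g θ = θ) :
    ∃ χ : G → ℂ, IsIrr G χ ∧ res N χ = θ := by
  obtain ⟨⟨d, ρ, rfl⟩, hnorm⟩ := hθ
  have hρ : ρ.IsIrreducible := (cInner_character_self_eq_one_iff ρ).mp hnorm
  have hequiv g : Nonempty (ρ.Equiv (ρ.comp (MulAut.conjNormal g).toMonoidHom)) := by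
    have hchar := (character_comp_conjNormal ρ g).trans (hinv g)
    have hirr := (cInner_character_self_eq_one_iff _).mp (hchar ▸ hnorm)
    exact nonempty_equiv_of_character_eq _ _ hchar.symm
  obtain ⟨ψ, hψ⟩ := ρ.exists_comp_subtype_eq_of_isCyclic hcyc hequiv
  have hres : IsIrreducible (ψ.comp N.subtype) := hψ ▸ hρ
  have hψirr : ψ.IsIrreducible := .of_comp N.subtype
  refine ⟨ψ.character, ⟨⟨d, ψ, rfl⟩, (cInner_character_self_eq_one_iff ψ).mpr hψirr⟩, ?_⟩
  subst hψ
  rfl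

end CT
end
end
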